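/- arXiv:1203.6481 — 3 statements merged into one kernel-verified Lean document; each statement's English description precedes it below -/
import Mathlib

section
/- Let I be a finite family of closed intervals in ℝ, let P be an inclusion-wise minimal piercing of I, and for each p ∈ P let I_p be a witness interval (an interval of I containing p and no other point of P). Then every point q ∈ ℝ is contained in the witness intervals of at most two points of P. Consequently, if Q is any piercing set of I, then |P| ≤ 2|Q|. -/
open Set

/-- `P` pierces the family of closed intervals `[s.1, s.2]`, `s ∈ S`. -/
def Pierces (P : Finset ℝ) (S : Finset (ℝ × ℝ)) : Prop :=
  ∀ s ∈ S, ∃ p ∈ P, p ∈ Icc s.1 s.2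

/-- Given a minimal piercing `P` with witness intervals `w p`, every point `q` lies in at most
two witness intervals; consequently `|P| ≤ 2 |Q|` for any piercing `Q`. -/
theorem minimal_piercing_le_two_mul (S : Finset (ℝ × ℝ)) (P : Finset ℝ)
    (hP : Pierces P S) (hmin : ∀ Q : Finset ℝ, Q ⊂ P → ¬ Pierces Q S)
    (w : ℝ → ℝ × ℝ)
    (hw : ∀ p ∈ P, w p ∈ S ∧ p ∈ Icc (w p).1 (w p).2 ∧
      ∀ q ∈ P, q ∈ Icc (w p).1 (w p).2 → q = p) :
    (∀ q : ℝ, (P.filter (fun p => q ∈ Icc (w p).1 (w p).2)).card ≤ 2) ∧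
      ∀ Q : Finset ℝ, Pierces Q S → P.card ≤ 2 * Q.card := by
  -- key sublemma: no point in three witness intervals, via ordered triple
  have key : ∀ q : ℝ, ∀ p1 ∈ P, ∀ p2 ∈ P, ∀ p3 ∈ P, p1 < p2 → p2 < p3 →
      q ∈ Icc (w p1).1 (w p1).2 → q ∈ Icc (w p3).1 (w p3).2 → False := by
    intro q p1 h1 p2 h2 p3 h3 h12 h23 hq1 hq3
    rcases le_total q p2 with hle | hle
    · have : p2 = p3 := (hw p3 h3).2.2 p2 h2
        ⟨le_trans hq3.1 hle, le_trans (le_of_lt h23) (hw p3 h3).2.1.2⟩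
      exact absurd this (ne_of_lt h23)
    · have : p2 = p1 := (hw p1 h1).2.2 p2 h2
        ⟨le_trans (hw p1 h1).2.1.1 (le_of_lt h12), le_trans hle hq1.2⟩
      exact absurd this (ne_of_gt h12)
  have part1 : ∀ q : ℝ, (P.filter (fun p => q ∈ Icc (w p).1 (w p).2)).card ≤ 2 := by
    intro q
    by_contra h
    push_neg at h
    rw [Finset.two_lt_card_iff] at h
    obtain ⟨a, b, c, ha, hb, hc, hab, hac, hbc⟩ := h
    simp only [Finset.mem_filter] at ha hb hc
    obtain ⟨haP, haq⟩ := ha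
    obtain ⟨hbP, hbq⟩ := hb
    obtain ⟨hcP, hcq⟩ := hc
    rcases lt_trichotomy a b with h1 | h1 | h1
    · rcases lt_trichotomy b c with h2 | h2 | h2
      · exact key q a haP b hbP c hcP h1 h2 haq hcq
      · exact hbc h2
      · rcases lt_trichotomy a c with h3 | h3 | h3
        · exact key q a haP c hcP b hbP h3 h2 haq hbq
        · exact hac h3
        · exact key q c hcP a haP b hbP h3 h1 hcq hbq
    · exact hab h1
    · rcases lt_trichotomy a c with h2 | h2 | h2
      · exact key q b hbP a haP c hcP h1 h2 hbq hcq
      · exact hac h2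
      · rcases lt_trichotomy b c with h3 | h3 | h3
        · exact key q b hbP c hcP a haP h3 h2 hbq haq
        · exact hbc h3
        · exact key q c hcP b hbP a haP h3 h1 hcq haq
  refine ⟨part1, fun Q hQ => ?_⟩
  classical
  set f : ℝ → ℝ := fun p =>
    if h : ∃ b ∈ Q, b ∈ Icc (w p).1 (w p).2 then h.choose else 0 with hf
  have hfmem : ∀ p ∈ P, f p ∈ Q ∧ f p ∈ Icc (w p).1 (w p).2 := by
    intro p hp
    have hex : ∃ b ∈ Q, b ∈ Icc (w p).1 (w p).2 := hQ (w p) (hw p hp).1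
    simp only [hf, dif_pos hex]
    exact ⟨hex.choose_spec.1, hex.choose_spec.2⟩
  apply Finset.card_le_mul_card_image_of_maps_to (f := f)
  · intro p hp; exact (hfmem p hp).1
  · intro b _
    calc (P.filter (fun p => f p = b)).card
        ≤ (P.filter (fun p => b ∈ Icc (w p).1 (w p).2)).card := by
          apply Finset.card_le_card
          intro p hp
          simp only [Finset.mem_filter] at hp ⊢
          exact ⟨hp.1, hp.2 ▸ (hfmem p hp.1).2⟩
      _ ≤ 2 := part1 b
end

section
/- Let π be a Manhattan path in ℝ^d from t to t' whose bounding box contains the origin. Then there is a Manhattan path from t to the origin contained in the union of π and the projections of π onto all coordinate subspaces spanned by subsets of the coordinate axes. In particular, the union of π with these 2^d projections contains M-paths from both t and t' to the origin. -/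
open Set

/-- Projection onto the coordinate subspace spanned by the axes in `S`: coordinates outside
`S` are set to `0`. -/
def coordProj {d : ℕ} (S : Finset (Fin d)) (x : Fin d → ℝ) : Fin d → ℝ :=
  fun i => if i ∈ S then x i else 0

lemma mpath_helper {d : ℕ} (π : ℝ → (Fin d → ℝ))
    (hcont : ContinuousOn π (Icc 0 1))
    (hmono : ∀ i, MonotoneOn (fun s => π s i) (Icc 0 1) ∨
      AntitoneOn (fun s => π s i) (Icc 0 1))
    (hbox : ∀ i, min (π 0 i) (π 1 i) ≤ 0 ∧ (0 : ℝ) ≤ max (π 0 i) (π 1 i)) :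
    ∃ γ : ℝ → (Fin d → ℝ), ContinuousOn γ (Icc 0 1) ∧ γ 0 = π 0 ∧ γ 1 = 0 ∧
      (∀ i, MonotoneOn (fun s => γ s i) (Icc 0 1) ∨ AntitoneOn (fun s => γ s i) (Icc 0 1)) ∧
      ∀ s ∈ Icc (0 : ℝ) 1, γ s ∈ ⋃ S : Finset (Fin d), coordProj S '' (π '' Icc 0 1) := by
  classical
  have hzero : ∀ i, ∃ s ∈ Icc (0:ℝ) 1, π s i = 0 := by
    intro i
    have hci : ContinuousOn (fun s => π s i) (uIcc (0:ℝ) 1) := by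
      rw [Set.uIcc_of_le zero_le_one]
      exact (continuous_apply i).comp_continuousOn hcont
    have h0 : (0:ℝ) ∈ uIcc (π 0 i) (π 1 i) := by
      rw [Set.uIcc]
      exact ⟨(hbox i).1, (hbox i).2⟩
    obtain ⟨s, hs, hs0⟩ := intermediate_value_uIcc hci h0
    rw [Set.uIcc_of_le zero_le_one] at hs
    exact ⟨s, hs, hs0⟩
  choose σ hσmem hσ using hzero
  refine ⟨fun s i => π (min s (σ i)) i, ?_, ?_, ?_, ?_, ?_⟩
  · rw [continuousOn_pi]
    intro i
    refine ((continuous_apply i).comp_continuousOn hcont).comp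
      ((continuous_id.min continuous_const).continuousOn) ?_
    intro s hs
    exact ⟨le_min hs.1 (hσmem i).1, min_le_of_left_le hs.2⟩
  · funext i
    simp [min_eq_left (hσmem i).1]
  · funext i
    simp [min_eq_right (hσmem i).2, hσ i]
  · intro i
    have hmin : ∀ s ∈ Icc (0:ℝ) 1, min s (σ i) ∈ Icc (0:ℝ) 1 := fun s hs =>
      ⟨le_min hs.1 (hσmem i).1, min_le_of_left_le hs.2⟩
    rcases hmono i with h | h
    · exact Or.inl fun a ha b hb hab => h (hmin a ha) (hmin b hb) (min_le_min hab le_rfl)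
    · exact Or.inr fun a ha b hb hab => h (hmin a ha) (hmin b hb) (min_le_min hab le_rfl)
  · intro s hs
    refine mem_iUnion.2 ⟨Finset.univ.filter (fun i => s ≤ σ i), π s, ⟨s, hs, rfl⟩, ?_⟩
    funext i
    simp only [coordProj, Finset.mem_filter, Finset.mem_univ, true_and]
    by_cases h : s ≤ σ i
    · simp [h, min_eq_left h]
    · simp [h, min_eq_right (le_of_not_ge h), hσ i]

/-- A Manhattan path from `t` to `t'` whose bounding box contains the origin can be turned
into Manhattan paths from `t` (and from `t'`) to the origin, lying in the union of the path
with its projections onto all coordinate subspaces. -/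
theorem mpath_to_origin_in_projections {d : ℕ} (t t' : Fin d → ℝ)
    (π : ℝ → (Fin d → ℝ))
    (hcont : ContinuousOn π (Icc 0 1))
    (hmono : ∀ i, MonotoneOn (fun s => π s i) (Icc 0 1) ∨
      AntitoneOn (fun s => π s i) (Icc 0 1))
    (h0 : π 0 = t) (h1 : π 1 = t')
    (hbox : ∀ i, min (t i) (t' i) ≤ 0 ∧ (0 : ℝ) ≤ max (t i) (t' i)) :
    (∃ γ : ℝ → (Fin d → ℝ), ContinuousOn γ (Icc 0 1) ∧ γ 0 = t ∧ γ 1 = 0 ∧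
      (∀ i, MonotoneOn (fun s => γ s i) (Icc 0 1) ∨ AntitoneOn (fun s => γ s i) (Icc 0 1)) ∧
      ∀ s ∈ Icc (0 : ℝ) 1, γ s ∈ ⋃ S : Finset (Fin d), coordProj S '' (π '' Icc 0 1)) ∧
    (∃ γ' : ℝ → (Fin d → ℝ), ContinuousOn γ' (Icc 0 1) ∧ γ' 0 = t' ∧ γ' 1 = 0 ∧
      (∀ i, MonotoneOn (fun s => γ' s i) (Icc 0 1) ∨ AntitoneOn (fun s => γ' s i) (Icc 0 1)) ∧
      ∀ s ∈ Icc (0 : ℝ) 1, γ' s ∈ ⋃ S : Finset (Fin d), coordProj S '' (π '' Icc 0 1)) := by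
  subst h0 h1
  constructor
  · exact mpath_helper π hcont hmono hbox
  · -- reversed path
    set ρ : ℝ → (Fin d → ℝ) := fun s => π (1 - s) with hρ
    have hmap : ∀ s ∈ Icc (0:ℝ) 1, (1 - s) ∈ Icc (0:ℝ) 1 := by
      intro s hs; constructor <;> [linarith [hs.2]; linarith [hs.1]]
    have hρcont : ContinuousOn ρ (Icc 0 1) :=
      hcont.comp ((continuous_const.sub continuous_id).continuousOn) hmap
    have hρmono : ∀ i, MonotoneOn (fun s => ρ s i) (Icc 0 1) ∨
        AntitoneOn (fun s => ρ s i) (Icc 0 1) := by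
      intro i
      rcases hmono i with h | h
      · exact Or.inr fun a ha b hb hab => h (hmap b hb) (hmap a ha) (by linarith)
      · exact Or.inl fun a ha b hb hab => h (hmap b hb) (hmap a ha) (by linarith)
    have hρbox : ∀ i, min (ρ 0 i) (ρ 1 i) ≤ 0 ∧ (0 : ℝ) ≤ max (ρ 0 i) (ρ 1 i) := by
      intro i
      simp only [hρ, sub_zero, sub_self]
      rw [min_comm, max_comm]
      exact hbox i
    obtain ⟨γ, hc, hg0, hg1, hm, hmem⟩ := mpath_helper ρ hρcont hρmono hρbox
    have himg : ρ '' Icc 0 1 = π '' Icc 0 1 := by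
      rw [hρ, show (fun s => π (1 - s)) = π ∘ (fun s : ℝ => 1 - s) from rfl,
        Set.image_comp]
      rw [Set.image_const_sub_Icc]
      norm_num
    rw [himg] at hmem
    have hg0' : γ 0 = π 1 := by rw [hg0, hρ]; norm_num
    exact ⟨γ, hc, hg0', hg1, hm, hmem⟩
end

section
/- Let T_j : ℕ → ℝ≥0 for j = 0, …, d satisfy T_d(n) ≤ c·n·log₂ n and T_j(n) ≤ 2·T_j(⌊n/2⌋) + T_{j+1}(n) + c·n for j < d, with T_j(1) ≤ c. Then T_0(n) = O(n·log₂^{d+1} n). -/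

lemma logb_half_succ_le (n : ℕ) (hn : 2 ≤ n) :
    Real.logb 2 ((n / 2 : ℕ) : ℝ) + 1 ≤ Real.logb 2 n := by
  have h1 : (1:ℝ) ≤ ((n/2 : ℕ) : ℝ) := by
    exact_mod_cast (Nat.one_le_div_iff (by norm_num)).mpr hn
  have h2 : ((n/2 : ℕ) : ℝ) ≤ (n:ℝ)/2 := Nat.cast_div_le
  have h3 : Real.logb 2 ((n/2:ℕ):ℝ) ≤ Real.logb 2 ((n:ℝ)/2) :=
    Real.logb_le_logb_of_le (by norm_num) (by positivity) h2
  have h4 : Real.logb 2 ((n:ℝ)/2) = Real.logb 2 n - 1 := by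
    rw [Real.logb_div (by positivity) (by norm_num)]
    rw [Real.logb_self_eq_one (by norm_num)]
  linarith

lemma one_le_logb_add_one (n : ℕ) (hn : 1 ≤ n) :
    1 ≤ Real.logb 2 n + 1 := by
  have : (0:ℝ) ≤ Real.logb 2 n := Real.logb_nonneg (by norm_num) (by exact_mod_cast hn)
  linarith

lemma rec_step (S : ℕ → ℝ) (K : ℝ) (k : ℕ) (hK : 0 < K)
    (hS1 : S 1 ≤ K)
    (hrec : ∀ n, 2 ≤ n → S n ≤ 2 * S (n/2) + K * n * (Real.logb 2 n + 1)^k) :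
    ∀ n, 1 ≤ n → S n ≤ K * n * (Real.logb 2 n + 1)^(k+1) := by
  intro n
  induction n using Nat.strong_induction_on with
  | _ n ih =>
  intro hn
  rcases eq_or_lt_of_le hn with h1 | h2
  · rw [← h1]
    simpa using hS1
  · have hn2 : 2 ≤ n := h2
    set L : ℝ := Real.logb 2 n + 1 with hL
    have hL2 : 2 ≤ L := by
      have : (1:ℝ) ≤ Real.logb 2 n := by
        rw [show (1:ℝ) = Real.logb 2 2 by
          rw [Real.logb_self_eq_one (by norm_num)]]
        exact Real.logb_le_logb_of_le (by norm_num) (by norm_num) (by exact_mod_cast hn2)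
      linarith
    have hm1 : 1 ≤ n / 2 := (Nat.one_le_div_iff (by norm_num)).mpr hn2
    have hIH := ih (n/2) (Nat.div_lt_self (by omega) (by norm_num)) hm1
    have hLm : Real.logb 2 ((n/2:ℕ):ℝ) + 1 ≤ L - 1 := by
      have := logb_half_succ_le n hn2
      linarith
    have hLmpos : (0:ℝ) ≤ Real.logb 2 ((n/2:ℕ):ℝ) + 1 := by
      linarith [one_le_logb_add_one (n/2) hm1]
    have hpow : (Real.logb 2 ((n/2:ℕ):ℝ) + 1)^(k+1) ≤ (L-1)^(k+1) :=
      pow_le_pow_left₀ hLmpos hLm _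
    have hmn : ((n/2:ℕ):ℝ) ≤ (n:ℝ)/2 := Nat.cast_div_le
    have hmpos : (0:ℝ) ≤ ((n/2:ℕ):ℝ) := by positivity
    have hSm : S (n/2) ≤ K * ((n:ℝ)/2) * (L-1)^(k+1) := by
      calc S (n/2) ≤ K * ((n/2:ℕ):ℝ) * (Real.logb 2 ((n/2:ℕ):ℝ) + 1)^(k+1) := hIH
        _ ≤ K * ((n:ℝ)/2) * (L-1)^(k+1) := by
            apply mul_le_mul
            · exact mul_le_mul_of_nonneg_left hmn (le_of_lt hK)
            · exact hpow
            · positivity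
            · positivity
    have hrecn := hrec n hn2
    -- key algebra: (L-1)^(k+1) + L^k ≤ L^(k+1)
    have hkey : (L-1)^(k+1) + L^k ≤ L^(k+1) := by
      have h1 : (L-1)^(k+1) ≤ (L-1) * L^k := by
        rw [pow_succ']
        apply mul_le_mul_of_nonneg_left _ (by linarith)
        exact pow_le_pow_left₀ (by linarith) (by linarith) _
      have : (L-1) * L^k + L^k = L^(k+1) := by ring
      linarith
    have hnn : (0:ℝ) ≤ (n:ℝ) := by positivity
    calc S n ≤ 2 * S (n/2) + K * n * L^k := hrecn
      _ ≤ 2 * (K * ((n:ℝ)/2) * (L-1)^(k+1)) + K * n * L^k := by linarith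
      _ = K * n * ((L-1)^(k+1) + L^k) := by ring
      _ ≤ K * n * L^(k+1) := by
          apply mul_le_mul_of_nonneg_left hkey (by positivity)

/-- Running-time recurrence system for the `d`-dimensional GMMN algorithm:
`T_d(n) ≤ c·n·log₂ n` (for `n ≥ 2`), `T_j(n) ≤ 2·T_j(⌊n/2⌋) + T_{j+1}(n) + c·n`
for `j < d`, `n ≥ 2`, and `T_j(1) ≤ c`; then `T_0(n) = O(n·log₂^{d+1} n)`. -/

theorem runtime_recurrence_system (d : ℕ) (T : ℕ → ℕ → ℝ) (c : ℝ) (hc : 0 < c)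
    (hpos : ∀ j n, 0 ≤ T j n)
    (hbase1 : ∀ j ≤ d, T j 1 ≤ c)
    (hbased : ∀ n ≥ 2, T d n ≤ c * n * Real.logb 2 n)
    (hrec : ∀ j < d, ∀ n ≥ 2, T j n ≤ 2 * T j (n / 2) + T (j + 1) n + c * n) :
    ∃ C : ℝ, ∀ n ≥ 1, T 0 n ≤ C * n * (Real.logb 2 n + 1) ^ (d + 1) := by
  have main : ∀ k j, j + k = d →
      ∃ C : ℝ, 0 < C ∧ ∀ n, 1 ≤ n → T j n ≤ C * n * (Real.logb 2 n + 1)^(k+1) := by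
    intro k
    induction k with
    | zero =>
      intro j hj
      have hj' : j = d := by omega
      subst hj'
      refine ⟨c, hc, ?_⟩
      intro n hn
      rcases eq_or_lt_of_le hn with h1 | h2
      · rw [← h1]
        simpa using hbase1 j le_rfl
      · have hn2 : (2:ℕ) ≤ n := h2
        calc T j n ≤ c * n * Real.logb 2 n := hbased n hn2
          _ ≤ c * n * (Real.logb 2 n + 1)^1 := by
              have : (0:ℝ) ≤ c * n := by positivity
              nlinarith
    | succ k ihk =>
      intro j hj
      have hjd : j < d := by omega
      obtain ⟨C', hC', hT'⟩ := ihk (j+1) (by omega)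
      refine ⟨C' + c, by linarith, ?_⟩
      apply rec_step (T j) (C' + c) (k+1) (by linarith)
      · linarith [hbase1 j (le_of_lt hjd)]
      · intro n hn2
        have hn1 : (1:ℕ) ≤ n := by omega
        have hL1 := one_le_logb_add_one n hn1
        have h1 := hrec j hjd n hn2
        have h2 := hT' n hn1
        have hp : (1:ℝ) ≤ (Real.logb 2 n + 1)^(k+1) := one_le_pow₀ hL1
        have h3 : c * n ≤ c * n * (Real.logb 2 n + 1)^(k+1) :=
          le_mul_of_one_le_right (by positivity) hp
        nlinarith [h1, h2, h3]
  obtain ⟨C, _, hC⟩ := main (d) 0 (by omega)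
  exact ⟨C, fun n hn => hC n hn⟩
end
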